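/- arXiv:math/0102179 — 3 statements merged into one kernel-verified Lean document; each statement's English description precedes it below -/
import Mathlib

section
/- Let A be a commutative ring, and let a ∈ A be a non-zero-divisor. In the polynomial ring A[X,Y], consider the ideal I = (aX − p, pY − a, XY − 1), where p ∈ A. If f(X,Y) = Σ_i c_i X^i + Σ_j d_j Y^j ∈ I (with no mixed monomials X^iY^j, i,j ≥ 1), then there exist polynomials u(X), v(Y) ∈ A[X,Y] with f(X,Y) = u(X)(aX − p) + v(Y)(pY − a). -/
/-!
Sending `X ↦ T` and `Y ↦ T⁻¹` kills `XY - 1` and turns `pY - a` into `-T⁻¹ (aT - p)`, so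
the image of `f` is `Q (aT - p)` for a Laurent polynomial `Q`. Splitting `Q` into its part in
`A[T]` and its part in `T⁻¹ A[T⁻¹]` gives
`c(T) + d(T⁻¹) = u(T) (aT - p) + v(T⁻¹) (pT⁻¹ - a)`; then `c - u (aX - p)` is a polynomial
in `T` equal to one in `T⁻¹`, hence a constant, and `d - v (pY - a)` is its negative.
-/

namespace LaurentPolynomial

open Polynomial

section CommSemiring

variable {R : Type*} [CommSemiring R]

theorem aeval_T_one (f : R[X]) : aeval (T 1 : R[T;T⁻¹]) f = toLaurent f := by
  simpa [toLaurentAlg_apply] using aeval_algHom_apply toLaurentAlg (X : R[X]) f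

theorem aeval_T_neg_one (f : R[X]) :
    aeval (T (-1) : R[T;T⁻¹]) f = invert (toLaurent f) := by
  simpa [aeval_T_one] using aeval_algHom_apply (invert (R := R)).toAlgHom (T 1) f

theorem trunc_invert_toLaurent (f : R[X]) :
    trunc (invert (toLaurent f)) = Polynomial.C (f.coeff 0) := by
  induction f using Polynomial.induction_on' with
  | add f g hf hg => simp [hf, hg]
  | monomial n r =>
    rw [← C_mul_X_pow_eq_monomial, toLaurent_C_mul_X_pow]
    simp only [map_mul, invert_C, invert_T, trunc_C_mul_T, coeff_C_mul_X_pow]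
    rcases n with _ | n
    · simp
    · simp; omega

theorem exists_C_of_toLaurent_eq_invert_toLaurent {f g : R[X]}
    (h : toLaurent f = invert (toLaurent g)) :
    ∃ r : R, f = Polynomial.C r ∧ g = Polynomial.C r := by
  have hf : f = Polynomial.C (g.coeff 0) := by
    rw [← trunc_toLaurent f, h, trunc_invert_toLaurent]
  have hg : g = Polynomial.C (f.coeff 0) := by
    rw [← trunc_toLaurent g, ← involutive_invert (toLaurent g), ← h, trunc_invert_toLaurent]
  exact ⟨g.coeff 0, hf, by rwa [hf, coeff_C_zero] at hg⟩

end CommSemiring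

variable {R : Type*} [CommRing R]

theorem exists_mul_eq_toLaurent_add_invert_toLaurent (a p : R) (Q : R[T;T⁻¹]) :
    ∃ u v : R[X], Q * (C a * T 1 - C p) =
      toLaurent (u * (Polynomial.C a * X - Polynomial.C p)) +
        invert (toLaurent (v * (Polynomial.C p * X - Polynomial.C a))) := by
  induction Q using LaurentPolynomial.induction_on' with
  | add Q₁ Q₂ h₁ h₂ =>
    obtain ⟨u₁, v₁, h₁⟩ := h₁
    obtain ⟨u₂, v₂, h₂⟩ := h₂
    refine ⟨u₁ + u₂, v₁ + v₂, ?_⟩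
    simp only [add_mul, map_add, h₁, h₂]
    ring
  | C_mul_T n r =>
    rcases n with n | n
    · refine ⟨Polynomial.C r * X ^ n, 0, ?_⟩
      simp only [map_mul, map_sub, toLaurent_C, toLaurent_X, toLaurent_X_pow, zero_mul,
        map_zero, add_zero, Int.ofNat_eq_natCast]
    · -- `T⁻ⁿ⁻¹ (aT - p) = -T⁻ⁿ (pT⁻¹ - a)`
      refine ⟨0, -(Polynomial.C r * X ^ n), ?_⟩
      have hT : (T (Int.negSucc n) : R[T;T⁻¹]) = T (-n) * T (-1) := by
        rw [← T_add]; congr 1; omega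
      have hT_inv : (T (-1) * T 1 : R[T;T⁻¹]) = 1 := by rw [← T_add]; simp
      simp only [map_mul, map_sub, map_neg, toLaurent_C, toLaurent_X, toLaurent_X_pow,
        invert_C, invert_T, zero_mul, map_zero, zero_add, hT]
      linear_combination C r * T (-n) * C a * hT_inv

theorem exists_eq_mul_add_C_of_toLaurent_add_invert_eq_mul {a p : R} {c d : R[X]}
    {Q : R[T;T⁻¹]} (h : toLaurent c + invert (toLaurent d) = Q * (C a * T 1 - C p)) :
    ∃ u v : R[X], ∃ r : R, c = u * (Polynomial.C a * X - Polynomial.C p) + Polynomial.C r ∧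
      d = v * (Polynomial.C p * X - Polynomial.C a) - Polynomial.C r := by
  obtain ⟨u, v, huv⟩ := exists_mul_eq_toLaurent_add_invert_toLaurent a p Q
  obtain ⟨r, hc, hd⟩ := exists_C_of_toLaurent_eq_invert_toLaurent
    (f := c - u * (Polynomial.C a * X - Polynomial.C p))
    (g := v * (Polynomial.C p * X - Polynomial.C a) - d)
    (by simp only [map_sub]; linear_combination h + huv)
  exact ⟨u, v, r, by linear_combination hc, by linear_combination -hd⟩

end LaurentPolynomial

open MvPolynomial
open scoped LaurentPolynomial
open LaurentPolynomial (T invert)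

noncomputable def laurentEval (R : Type*) [CommSemiring R] :
    MvPolynomial (Fin 2) R →ₐ[R] R[T;T⁻¹] :=
  aeval ![T 1, T (-1)]

theorem laurentEval_aeval_X_zero {R : Type*} [CommSemiring R] (c : Polynomial R) :
    laurentEval R (Polynomial.aeval (X 0) c) = Polynomial.toLaurent c := by
  rw [← Polynomial.aeval_algHom_apply, laurentEval, aeval_X]
  exact LaurentPolynomial.aeval_T_one c

theorem laurentEval_aeval_X_one {R : Type*} [CommSemiring R] (d : Polynomial R) :
    laurentEval R (Polynomial.aeval (X 1) d) = invert (Polynomial.toLaurent d) := by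
  rw [← Polynomial.aeval_algHom_apply, laurentEval, aeval_X]
  exact LaurentPolynomial.aeval_T_neg_one d

theorem span_le_comap_laurentEval {R : Type*} [CommRing R] (a p : R) :
    Ideal.span {C a * X 0 - C p, C p * X 1 - C a, X 0 * X 1 - 1} ≤
      (Ideal.span {LaurentPolynomial.C a * T 1 - LaurentPolynomial.C p}).comap
        (laurentEval R) := by
  have hT : (T 1 * T (-1) : R[T;T⁻¹]) = 1 := by rw [← LaurentPolynomial.T_add]; simp
  rw [Ideal.span_le]
  simp only [Set.insert_subset_iff, Set.singleton_subset_iff, SetLike.mem_coe, Ideal.mem_comap,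
    Ideal.mem_span_singleton', laurentEval, map_sub, map_mul, map_one, aeval_X, aeval_C,
    Matrix.cons_val_zero, Matrix.cons_val_one, LaurentPolynomial.algebraMap_apply,
    Algebra.algebraMap_self, RingHom.id_apply]
  refine ⟨⟨1, one_mul _⟩, ⟨-T (-1), ?_⟩, ⟨0, ?_⟩⟩
  · linear_combination -LaurentPolynomial.C a * hT
  · linear_combination -hT

theorem no_mixed_terms_ideal_membership_general (A : Type*) [CommRing A] (p a : A)
    (f : MvPolynomial (Fin 2) A)
    (c d : Polynomial A)
    (hf : f = Polynomial.aeval (X 0 : MvPolynomial (Fin 2) A) c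
        + Polynomial.aeval (X 1 : MvPolynomial (Fin 2) A) d)
    (hfI : f ∈ Ideal.span ({C a * X 0 - C p, C p * X 1 - C a, X 0 * X 1 - 1} :
        Set (MvPolynomial (Fin 2) A))) :
    ∃ u v : Polynomial A,
      f = Polynomial.aeval (X 0 : MvPolynomial (Fin 2) A) u * (C a * X 0 - C p)
        + Polynomial.aeval (X 1 : MvPolynomial (Fin 2) A) v * (C p * X 1 - C a) := by
  obtain ⟨Q, hQ⟩ := Ideal.mem_span_singleton'.mp (span_le_comap_laurentEval a p hfI)
  rw [hf, map_add, laurentEval_aeval_X_zero, laurentEval_aeval_X_one] at hQ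
  obtain ⟨u, v, r, rfl, rfl⟩ :=
    LaurentPolynomial.exists_eq_mul_add_C_of_toLaurent_add_invert_eq_mul hQ.symm
  refine ⟨u, v, ?_⟩
  simp [hf, MvPolynomial.algebraMap_eq]

/-- Let `A` be a commutative ring and `a ∈ A` a non-zero-divisor. In `A[X,Y]` consider the ideal
`I = (aX − p, pY − a, XY − 1)`.  If `f(X,Y) = Σ_i c_i X^i + Σ_j d_j Y^j ∈ I` (no mixed monomials),
then `f` can be written `u(X)(aX − p) + v(Y)(pY − a)` with `u` a polynomial in `X` only and `v` a
polynomial in `Y` only. -/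
theorem no_mixed_terms_ideal_membership (A : Type*) [CommRing A] (p a : A)
    (ha : ∀ x : A, a * x = 0 → x = 0)
    (f : MvPolynomial (Fin 2) A)
    (c d : Polynomial A)
    (hf : f = Polynomial.aeval (X 0 : MvPolynomial (Fin 2) A) c
        + Polynomial.aeval (X 1 : MvPolynomial (Fin 2) A) d)
    (hfI : f ∈ Ideal.span ({C a * X 0 - C p, C p * X 1 - C a, X 0 * X 1 - 1} :
        Set (MvPolynomial (Fin 2) A))) :
    ∃ u v : Polynomial A,
      f = Polynomial.aeval (X 0 : MvPolynomial (Fin 2) A) u * (C a * X 0 - C p)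
        + Polynomial.aeval (X 1 : MvPolynomial (Fin 2) A) v * (C p * X 1 - C a) :=
  no_mixed_terms_ideal_membership_general A p a f c d hf hfI
end

section
/- Let F be a complete discretely valued field of characteristic 0 and let H = ∪_{r<1} H(r) be the Robba ring of Laurent series over F converging on annuli r ≤ |T| < 1. Define the derivation ∂ = (1+T) d/dT on H. Then ∂: H ⊕ F·log(T) → H is surjective, where ∂(log T) := (1+T)/T; explicitly, for every F(T) ∈ H there exist G(T) ∈ H and c ∈ F with F(T) = ∂G(T) + c·(1+T)/T. -/
open Filter

/-- A coefficient function `f : ℤ → F` represents a Laurent series `Σ_k f k · T^k` converging on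
the annulus `r ≤ |T| < 1`. -/
def RobbaConv (F : Type*) [NontriviallyNormedField F] (r : ℝ) (f : ℤ → F) : Prop :=
  ∀ ρ : ℝ, ρ ∈ Set.Ico r 1 →
    Tendsto (fun k : ℤ => ‖f k‖ * ρ ^ k) (cocompact ℤ) (nhds 0)

/-- The derivation `∂ = (1+T) d/dT` on coefficient functions: the coefficient of `T^k` in
`∂(Σ g_k T^k)` is `(k+1)·g_{k+1} + k·g_k`. -/
noncomputable def Dop (F : Type*) [NontriviallyNormedField F] (g : ℤ → F) : ℤ → F :=
  fun k => ((k + 1 : ℤ) : F) * g (k + 1) + ((k : ℤ) : F) * g k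

/-- The coefficient function of `∂(log T) = (1+T)/T = T⁻¹ + 1`. -/
noncomputable def dlogT (F : Type*) [NontriviallyNormedField F] : ℤ → F :=
  fun k => if k = -1 ∨ k = 0 then 1 else 0

private lemma norm_nat_eq_one {F : Type*} [NontriviallyNormedField F] [IsUltrametricDist F]
    (p : ℕ) (hone : ∀ q : ℕ, q.Prime → q ≠ p → ‖(q : F)‖ = 1) :
    ∀ n : ℕ, n ≠ 0 → ¬ p ∣ n → ‖(n : F)‖ = 1 := by
  intro n
  induction n using Nat.strong_induction_on with
  | _ n ih =>
    intro hn hpn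
    rcases eq_or_ne n 1 with rfl | h1
    · simp
    · have hp2 : n.minFac.Prime := Nat.minFac_prime h1
      obtain ⟨m, hm⟩ := Nat.minFac_dvd n
      have hm0 : m ≠ 0 := by rintro rfl; simp at hm; exact hn hm
      have hmn : m < n := by
        have := hp2.two_le
        calc m < 2 * m := by omega
        _ ≤ n.minFac * m := Nat.mul_le_mul_right m this
        _ = n := hm.symm
      have hq : n.minFac ≠ p := by
        rintro rfl
        exact hpn (Nat.minFac_dvd n)
      have hpm : ¬ p ∣ m := fun h => hpn (hm ▸ Dvd.dvd.mul_left h _)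
      have hcast : ((n : F)) = (n.minFac : F) * (m : F) := by
        conv_lhs => rw [hm]
        push_cast; ring
      rw [hcast, norm_mul, hone _ hp2 hq, ih m hmn hm0 hpm, one_mul]

private lemma exists_beta (F : Type*) [NontriviallyNormedField F] [IsUltrametricDist F]
    [CharZero F] :
    ∃ β : ℝ, 0 ≤ β ∧ ∀ n : ℤ, n ≠ 0 → ‖(n : F)‖⁻¹ ≤ |(n : ℝ)| ^ β := by
  suffices h : ∃ β : ℝ, 0 ≤ β ∧ ∀ n : ℕ, n ≠ 0 → ‖(n : F)‖⁻¹ ≤ (n : ℝ) ^ β by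
    obtain ⟨β, hβ0, hβ⟩ := h
    refine ⟨β, hβ0, fun n hn => ?_⟩
    have h2 : ‖(n : F)‖ = ‖(n.natAbs : F)‖ := by
      rcases Int.natAbs_eq n with h | h
      · have he : (n : F) = (n.natAbs : F) := by
          rw [← Int.cast_natCast (R := F), ← h]
        rw [he]
      · have he : (n : F) = -(n.natAbs : F) := by
          rw [← Int.cast_natCast (R := F), ← Int.cast_neg, ← h]
        rw [he, norm_neg]
    have h3 : |(n : ℝ)| = (n.natAbs : ℝ) := by
      rw [Nat.cast_natAbs, Int.cast_abs]
    rw [h2, h3]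
    exact hβ n.natAbs (by simpa using hn)
  by_cases hall : ∀ q : ℕ, q.Prime → ‖(q : F)‖ = 1
  · refine ⟨0, le_refl _, fun n hn => ?_⟩
    rw [Real.rpow_zero, norm_nat_eq_one 0 (fun q hq _ => hall q hq) n hn (by simpa using hn)]
    simp
  · push_neg at hall
    obtain ⟨p, hp, hpne⟩ := hall
    have hple : ‖(p : F)‖ ≤ 1 := IsUltrametricDist.norm_natCast_le_one F p
    have hplt : ‖(p : F)‖ < 1 := lt_of_le_of_ne hple hpne
    have hppos : (0:ℝ) < ‖(p : F)‖ := by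
      rw [norm_pos_iff]
      exact_mod_cast (Nat.cast_ne_zero (R := F)).mpr hp.ne_zero
    have hone : ∀ q : ℕ, q.Prime → q ≠ p → ‖(q : F)‖ = 1 := by
      intro q hq hqp
      by_contra hne
      have hqlt : ‖(q : F)‖ < 1 :=
        lt_of_le_of_ne (IsUltrametricDist.norm_natCast_le_one F q) hne
      have hcop : IsCoprime (p : ℤ) (q : ℤ) := by
        rw [Int.isCoprime_iff_gcd_eq_one]
        exact_mod_cast Nat.coprime_primes hp hq |>.mpr (fun h => hqp h.symm)
      obtain ⟨a, b, hab⟩ := hcop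
      have hcast : (1 : F) = (a : F) * (p : F) + (b : F) * (q : F) := by
        have := congrArg (fun z : ℤ => (z : F)) hab
        push_cast at this
        exact this.symm
      have hle := IsUltrametricDist.norm_add_le_max ((a : F) * (p : F)) ((b : F) * (q : F))
      rw [← hcast, norm_one, norm_mul, norm_mul] at hle
      have ha1 : ‖(a : F)‖ ≤ 1 := IsUltrametricDist.norm_intCast_le_one F a
      have hb1 : ‖(b : F)‖ ≤ 1 := IsUltrametricDist.norm_intCast_le_one F b
      have h1 : ‖(a : F)‖ * ‖(p : F)‖ < 1 := by nlinarith [norm_nonneg ((a : F))]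
      have h2 : ‖(b : F)‖ * ‖(q : F)‖ < 1 := by
        nlinarith [norm_nonneg ((b : F)), norm_nonneg ((q : F))]
      have := max_lt h1 h2
      linarith
    -- general n
    set β : ℝ := Real.log (‖(p : F)‖⁻¹) / Real.log p with hβdef
    have hlogp : (0:ℝ) < Real.log p := Real.log_pos (by exact_mod_cast hp.one_lt)
    have hlogpinv : (0:ℝ) < Real.log (‖(p : F)‖⁻¹) := by
      rw [Real.log_inv]
      linarith [Real.log_neg hppos hplt]
    have hβ0 : 0 ≤ β := le_of_lt (div_pos hlogpinv hlogp)
    refine ⟨β, hβ0, fun n hn => ?_⟩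
    set v : ℕ := n.factorization p with hv
    have hsplit : p ^ v * (n / p ^ v) = n := Nat.ordProj_mul_ordCompl_eq_self n p
    have hmne : (n / p ^ v) ≠ 0 := (Nat.ordCompl_pos p (by omega)).ne'
    have hmnd : ¬ p ∣ (n / p ^ v) := Nat.not_dvd_ordCompl hp (by omega)
    have hnormm : ‖((n / p ^ v : ℕ) : F)‖ = 1 := norm_nat_eq_one p hone _ hmne hmnd
    have hnorm : ‖(n : F)‖ = ‖(p : F)‖ ^ v := by
      have : ((n : F)) = ((p : F)) ^ v * ((n / p ^ v : ℕ) : F) := by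
        conv_lhs => rw [← hsplit]
        push_cast; ring
      rw [this, norm_mul, norm_pow, hnormm, mul_one]
    have hpvn : (p : ℝ) ^ v ≤ (n : ℝ) := by
      exact_mod_cast Nat.le_of_dvd (by omega) (Nat.ordProj_dvd n p)
    have hnpos : (0:ℝ) < n := by exact_mod_cast Nat.pos_of_ne_zero hn
    rw [hnorm, ← inv_pow]
    rw [← Real.log_le_log_iff (pow_pos (inv_pos.mpr hppos) v) (Real.rpow_pos_of_pos hnpos β)]
    rw [Real.log_pow, Real.log_rpow hnpos]
    have hvlog : (v : ℝ) * Real.log p ≤ Real.log n := by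
      rw [← Real.log_pow]
      exact Real.log_le_log (pow_pos (by exact_mod_cast hp.pos) v) hpvn
    rw [hβdef, div_mul_eq_mul_div, le_div_iff₀ hlogp]
    nlinarith [hlogpinv, hlogp, hvlog]

private lemma rpow_geom_tendsto_atTop (β : ℝ) (hβ : 0 ≤ β) {q : ℝ} (hq0 : 0 < q) (hq1 : q < 1) :
    Tendsto (fun n : ℤ => |(n : ℝ)| ^ β * q ^ n) atTop (nhds 0) := by
  have hnat : Tendsto (fun m : ℕ => (m : ℝ) ^ β * q ^ m) atTop (nhds 0) := by
    have hsum := summable_norm_pow_mul_geometric_of_norm_lt_one (R := ℝ) ⌈β⌉₊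
      (by rwa [Real.norm_eq_abs, abs_of_pos hq0])
    have h0 := hsum.tendsto_atTop_zero
    apply squeeze_zero' (Filter.Eventually.of_forall fun m => by positivity) ?_ h0
    filter_upwards [Filter.eventually_ge_atTop 1] with m hm
    have h1 : (1:ℝ) ≤ m := by exact_mod_cast hm
    have h2 : (m:ℝ) ^ β ≤ (m:ℝ) ^ (⌈β⌉₊ : ℝ) :=
      Real.rpow_le_rpow_of_exponent_le h1 (Nat.le_ceil β)
    rw [Real.rpow_natCast] at h2
    calc (m:ℝ) ^ β * q ^ m ≤ (m:ℝ) ^ (⌈β⌉₊ : ℕ) * q ^ m :=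
          mul_le_mul_of_nonneg_right h2 (by positivity)
      _ ≤ ‖(m:ℝ) ^ (⌈β⌉₊ : ℕ) * q ^ m‖ := le_abs_self _
  have htoNat : Tendsto Int.toNat atTop atTop := by
    apply tendsto_atTop_atTop.mpr
    intro b
    exact ⟨(b : ℤ), fun n hn => by omega⟩
  apply (hnat.comp htoNat).congr'
  filter_upwards [eventually_ge_atTop (0 : ℤ)] with n hn
  have h1 : ((n.toNat : ℝ)) = |(n : ℝ)| := by
    rw [abs_of_nonneg (by exact_mod_cast hn)]
    exact_mod_cast congrArg (fun z : ℤ => (z : ℝ)) (Int.toNat_of_nonneg hn)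
  have h2 : q ^ (n.toNat) = q ^ n := by
    rw [← zpow_natCast, Int.toNat_of_nonneg hn]
  simp only [Function.comp_apply, h1, h2]

private lemma rpow_geom_tendsto_atBot (β : ℝ) (hβ : 0 ≤ β) {Q : ℝ} (hQ : 1 < Q) :
    Tendsto (fun n : ℤ => |(n : ℝ)| ^ β * Q ^ n) atBot (nhds 0) := by
  have hQ0 : 0 < Q := lt_trans one_pos hQ
  have h := rpow_geom_tendsto_atTop β hβ (q := Q⁻¹) (inv_pos.mpr hQ0) (inv_lt_one_of_one_lt₀ hQ)
  have hneg : Tendsto (fun n : ℤ => -n) atBot atTop := tendsto_neg_atBot_atTop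
  apply (h.comp hneg).congr
  intro n
  simp only [Function.comp_apply]
  rw [Int.cast_neg, abs_neg, zpow_neg, inv_zpow, inv_inv]

private lemma key_alg {σ ρ : ℝ} (hσ : σ ≠ 0) (n : ℤ) :
    σ ^ (-(n-1)) * ρ ^ n = σ * ((ρ/σ) ^ n) := by
  rw [div_zpow, div_eq_mul_inv (ρ ^ n), ← zpow_neg]
  have he : -(n-1) = 1 + (-n) := by ring
  rw [he, zpow_add₀ hσ, zpow_one]
  ring

/-- Let `F` be a complete discretely valued field of characteristic `0` and `H` the Robba ring
over `F`.  The derivation `∂ = (1+T) d/dT` is surjective from `H ⊕ F·log T` to `H`, where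
`∂(log T) = (1+T)/T`: for every `f ∈ H` (converging on `r ≤ |T| < 1`) there exist `g ∈ H`
(converging on a possibly smaller annulus `r' ≤ |T| < 1`) and `c ∈ F` with `f = ∂g + c·(1+T)/T`. -/
theorem robba_derivation_surjective (F : Type*) [NontriviallyNormedField F] [CompleteSpace F]
    [IsUltrametricDist F] [CharZero F]
    (hdisc : ∃ c : ℝ, 1 < c ∧ ∀ x : F, x ≠ 0 → ∃ n : ℤ, ‖x‖ = c ^ n)
    (r : ℝ) (hr : 0 < r) (hr1 : r < 1)
    (f : ℤ → F) (hf : RobbaConv F r f) :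
    ∃ r' ∈ Set.Ico r 1, ∃ g : ℤ → F, RobbaConv F r' g ∧
      ∃ c : F, f = Dop F g + c • dlogT F := by
  clear hdisc
  obtain ⟨β, hβ0, hβ⟩ := exists_beta F
  set t : ℤ → ℕ → F := fun n j => (-1 : F) ^ j * f (n - j) with ht
  have htnorm : ∀ n : ℤ, ∀ j : ℕ, ‖t n j‖ = ‖f (n - j)‖ := by
    intro n j
    rw [ht]
    simp only [norm_mul, norm_pow, norm_neg, norm_one, one_pow, one_mul]
  have hfB : ∀ ρ : ℝ, ρ ∈ Set.Ico r 1 →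
      Tendsto (fun k : ℤ => ‖f k‖ * ρ ^ k) atBot (nhds 0) := fun ρ hρ =>
    (hf ρ hρ).mono_left (by rw [cocompact_eq_atBot_atTop]; exact le_sup_left)
  -- summability of the convolution defining a
  have hsumm : ∀ n : ℤ, Summable (t n) := by
    intro n
    apply NonarchimedeanAddGroup.summable_of_tendsto_cofinite_zero
    rw [Nat.cofinite_eq_atTop, tendsto_zero_iff_norm_tendsto_zero]
    have heq : ∀ j : ℕ, ‖t n j‖ = (‖f (n - j)‖ * r ^ (n - (j:ℤ))) * r ^ ((j:ℤ) - n) := by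
      intro j
      rw [htnorm n j, mul_assoc, ← zpow_add₀ (ne_of_gt hr)]
      simp
    have h1 : Tendsto (fun j : ℕ => n - (j:ℤ)) atTop atBot := by
      apply tendsto_atBot.mpr
      intro b
      filter_upwards [eventually_ge_atTop (n - b).toNat] with j hj
      omega
    have h2 : Tendsto (fun j : ℕ => ‖f (n - (j:ℤ))‖ * r ^ (n - (j:ℤ))) atTop (nhds 0) :=
      (hfB r ⟨le_refl r, hr1⟩).comp h1
    have h3 : Tendsto (fun j : ℕ => r ^ ((j:ℤ) - n)) atTop (nhds 0) := by
      have hpow : Tendsto (fun j : ℕ => r ^ j) atTop (nhds 0) :=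
        tendsto_pow_atTop_nhds_zero_of_lt_one hr.le hr1
      have := hpow.const_mul (r ^ (-n))
      rw [mul_zero] at this
      apply this.congr
      intro j
      rw [← zpow_natCast r j, ← zpow_add₀ (ne_of_gt hr)]
      congr 1
      ring
    have := h2.mul h3
    rw [mul_zero] at this
    exact this.congr fun j => (heq j).symm
  set a : ℤ → F := fun n => ∑' j : ℕ, t n j with ha
  -- the basic recurrence
  have hrel : ∀ n : ℤ, a n = f n - a (n - 1) := by
    intro n
    have h0 : a n = t n 0 + ∑' j : ℕ, t n (j + 1) := Summable.tsum_eq_zero_add (hsumm n)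
    have h1 : t n 0 = f n := by rw [ht]; simp
    have h2 : ∀ j : ℕ, t n (j + 1) = -(t (n - 1) j) := by
      intro j
      rw [ht]
      simp only
      have harg : n - ((j:ℤ) + 1) = n - 1 - (j:ℤ) := by ring
      push_cast
      rw [harg, pow_succ]
      ring
    rw [h0, h1]
    have h3 : ∑' j : ℕ, t n (j + 1) = -a (n - 1) := by
      rw [ha]
      simp only [h2]
      rw [tsum_neg]
    rw [h3]
    ring
  have hfa : ∀ n : ℤ, f n = a n + a (n - 1) := by
    intro n
    rw [hrel n]
    ring
  -- bounds on a
  have hdiv : ∀ σ : ℝ, 0 < σ → ∀ x ε : ℝ, ∀ k : ℤ, x * σ ^ k ≤ ε → x ≤ ε * σ ^ (-k) := by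
    intro σ hσ x ε k h
    rw [zpow_neg, ← div_eq_mul_inv, le_div_iff₀ (zpow_pos hσ k)]
    exact h
  have habound : ∀ σ : ℝ, 0 < σ → σ < 1 → ∀ C : ℝ, 0 ≤ C → ∀ m : ℤ,
      (∀ k : ℤ, k ≤ m → ‖f k‖ ≤ C * σ ^ (-k)) → ‖a m‖ ≤ C * σ ^ (-m) := by
    intro σ hσ0 hσ1 C hC m hk
    apply IsUltrametricDist.norm_tsum_le_of_forall_le_of_nonneg
      (by positivity)
    intro j
    rw [htnorm m j]
    refine (hk (m - j) (by omega)).trans ?_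
    have h3 : σ ^ (-(m - (j:ℤ))) = σ ^ ((j:ℕ):ℤ) * σ ^ (-m) := by
      rw [← zpow_add₀ (ne_of_gt hσ0)]
      congr 1
      ring
    rw [h3]
    calc C * (σ ^ ((j:ℕ):ℤ) * σ ^ (-m)) ≤ C * (1 * σ ^ (-m)) := by
          apply mul_le_mul_of_nonneg_left _ hC
          apply mul_le_mul_of_nonneg_right _ (zpow_pos hσ0 (-m)).le
          rw [zpow_natCast]
          exact pow_le_one₀ hσ0.le hσ1.le
      _ = C * σ ^ (-m) := by ring
  -- Fact A
  have hFactA : ∀ σ : ℝ, r ≤ σ → σ < 1 → ∀ ε : ℝ, 0 < ε →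
      ∃ K : ℤ, ∀ m : ℤ, m ≤ K → ‖a m‖ ≤ ε * σ ^ (-m) := by
    intro σ hσr hσ1 ε hε
    have hσ0 : 0 < σ := lt_of_lt_of_le hr hσr
    have hev : ∀ᶠ k in atBot, ‖f k‖ * σ ^ k ≤ ε := by
      filter_upwards [(hfB σ ⟨hσr, hσ1⟩).eventually (gt_mem_nhds hε)] with k hk
      exact hk.le
    obtain ⟨K, hK⟩ := eventually_atBot.mp hev
    refine ⟨K, fun m hm => ?_⟩
    apply habound σ hσ0 hσ1 ε hε.le m
    intro k hkm
    exact hdiv σ hσ0 _ ε k (hK k (le_trans hkm hm))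
  -- Fact B
  have hFactB : ∀ σ : ℝ, r ≤ σ → σ < 1 →
      ∃ M : ℝ, 1 ≤ M ∧ ∀ m : ℤ, ‖a m‖ ≤ M * σ ^ (-m) := by
    intro σ hσr hσ1
    have hσ0 : 0 < σ := lt_of_lt_of_le hr hσr
    have hco := hf σ ⟨hσr, hσ1⟩
    rw [cocompact_eq_cofinite] at hco
    have hev : ∀ᶠ k in cofinite, ‖f k‖ * σ ^ k < 1 := hco.eventually (gt_mem_nhds one_pos)
    have hfin : {k : ℤ | ¬ (‖f k‖ * σ ^ k < 1)}.Finite := eventually_cofinite.mp hev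
    set M : ℝ := 1 + ∑ k ∈ hfin.toFinset, ‖f k‖ * σ ^ k with hM
    have hsum_nonneg : (0:ℝ) ≤ ∑ k ∈ hfin.toFinset, ‖f k‖ * σ ^ k :=
      Finset.sum_nonneg fun k _ => by positivity
    have hM1 : 1 ≤ M := by rw [hM]; linarith
    refine ⟨M, hM1, fun m => ?_⟩
    apply habound σ hσ0 hσ1 M (by linarith) m
    intro k _
    apply hdiv σ hσ0 _ M k
    by_cases hk : ‖f k‖ * σ ^ k < 1
    · linarith
    · have hmem : k ∈ hfin.toFinset := by
        rw [Set.Finite.mem_toFinset]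
        exact hk
      have h5 : ‖f k‖ * σ ^ k ≤ ∑ x ∈ hfin.toFinset, ‖f x‖ * σ ^ x :=
        Finset.single_le_sum (f := fun k => ‖f k‖ * σ ^ k)
          (fun i _ => by positivity) hmem
      rw [hM]
      linarith
  -- define c and g
  set c : F := a (-1) with hc
  set g : ℤ → F := fun n => if n = 0 then 0 else ((n : ℤ) : F)⁻¹ * a (n - 1) with hg
  have hgnorm : ∀ n : ℤ, n ≠ 0 → ‖g n‖ ≤ |(n:ℝ)| ^ β * ‖a (n - 1)‖ := by
    intro n hn
    rw [hg]
    simp only [if_neg hn, norm_mul, norm_inv]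
    exact mul_le_mul_of_nonneg_right (hβ n hn) (norm_nonneg _)
  -- the radius
  set r' : ℝ := (1 + r) / 2 with hr'
  have hrr' : r < r' := by rw [hr']; linarith
  have hr'1 : r' < 1 := by rw [hr']; linarith
  have hr'0 : 0 < r' := lt_trans hr hrr'
  refine ⟨r', ⟨hrr'.le, hr'1⟩, g, ?_, c, ?_⟩
  · -- convergence
    intro ρ ⟨hρ1, hρ2⟩
    have hρr : r < ρ := lt_of_lt_of_le hrr' hρ1
    have hρ0 : 0 < ρ := lt_trans hr hρr
    rw [cocompact_eq_atBot_atTop, tendsto_sup]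
    constructor
    · -- atBot
      rw [Metric.tendsto_nhds]
      intro ε hε
      set σ : ℝ := (r + ρ) / 2 with hσ
      have hσr : r ≤ σ := by rw [hσ]; linarith
      have hσρ : σ < ρ := by rw [hσ]; linarith
      have hσ1 : σ < 1 := lt_trans hσρ hρ2
      have hσ0 : 0 < σ := lt_of_lt_of_le hr hσr
      have hQ : 1 < ρ / σ := (one_lt_div hσ0).mpr hσρ
      set ε₀ : ℝ := ε / (2 * σ) with hε₀def
      have hε₀ : 0 < ε₀ := by rw [hε₀def]; positivity
      obtain ⟨K, hK⟩ := hFactA σ hσr hσ1 ε₀ hε₀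
      have hgeom := (rpow_geom_tendsto_atBot β hβ0 hQ).eventually (gt_mem_nhds one_pos)
      filter_upwards [hgeom, eventually_le_atBot (min K (-1) : ℤ)] with n h1 h2
      have hn1 : n ≤ -1 := le_trans h2 (min_le_right _ _)
      have hnK : n - 1 ≤ K := by
        have := le_trans h2 (min_le_left _ _)
        omega
      have hne : n ≠ 0 := by omega
      rw [Real.dist_0_eq_abs, abs_of_nonneg (by positivity)]
      have key := key_alg (σ := σ) (ρ := ρ) (ne_of_gt hσ0) n
      have e1 : ‖g n‖ * ρ ^ n ≤ (|(n:ℝ)| ^ β * ‖a (n - 1)‖) * ρ ^ n :=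
        mul_le_mul_of_nonneg_right (hgnorm n hne) (zpow_pos hρ0 n).le
      have e2 : ‖a (n-1)‖ ≤ ε₀ * σ ^ (-(n-1)) := hK (n-1) hnK
      have e3 : (|(n:ℝ)| ^ β * ‖a (n - 1)‖) * ρ ^ n
          ≤ (|(n:ℝ)| ^ β * (ε₀ * σ ^ (-(n-1)))) * ρ ^ n := by
        apply mul_le_mul_of_nonneg_right _ (zpow_pos hρ0 n).le
        exact mul_le_mul_of_nonneg_left e2 (Real.rpow_nonneg (abs_nonneg _) β)
      have e4 : (|(n:ℝ)| ^ β * (ε₀ * σ ^ (-(n-1)))) * ρ ^ n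
          = (ε₀ * σ) * (|(n:ℝ)| ^ β * (ρ/σ) ^ n) := by
        linear_combination (ε₀ * |(n:ℝ)| ^ β) * key
      have e5 : (ε₀ * σ) * (|(n:ℝ)| ^ β * (ρ/σ) ^ n) ≤ (ε₀ * σ) * 1 := by
        apply mul_le_mul_of_nonneg_left h1.le (by positivity)
      have e6 : ε₀ * σ = ε / 2 := by
        rw [hε₀def]
        field_simp
      calc ‖g n‖ * ρ ^ n ≤ (|(n:ℝ)| ^ β * ‖a (n - 1)‖) * ρ ^ n := e1
        _ ≤ (|(n:ℝ)| ^ β * (ε₀ * σ ^ (-(n-1)))) * ρ ^ n := e3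
        _ = (ε₀ * σ) * (|(n:ℝ)| ^ β * (ρ/σ) ^ n) := e4
        _ ≤ (ε₀ * σ) * 1 := e5
        _ = ε / 2 := by rw [mul_one, e6]
        _ < ε := by linarith
    · -- atTop
      set σ : ℝ := (1 + ρ) / 2 with hσ
      have hσρ : ρ < σ := by rw [hσ]; linarith
      have hσ1 : σ < 1 := by rw [hσ]; linarith
      have hσr : r ≤ σ := le_trans hρr.le hσρ.le
      have hσ0 : 0 < σ := lt_trans hρ0 hσρ
      have hq0 : 0 < ρ / σ := div_pos hρ0 hσ0
      have hq1 : ρ / σ < 1 := (div_lt_one hσ0).mpr hσρ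
      obtain ⟨M, hM1, hM⟩ := hFactB σ hσr hσ1
      have htend : Tendsto (fun n : ℤ => (M * σ) * (|(n:ℝ)| ^ β * (ρ/σ) ^ n)) atTop (nhds 0) := by
        have := (rpow_geom_tendsto_atTop β hβ0 hq0 hq1).const_mul (M * σ)
        rwa [mul_zero] at this
      apply squeeze_zero' ?_ ?_ htend
      · filter_upwards with n
        positivity
      · filter_upwards [eventually_ge_atTop (1 : ℤ)] with n hn
        have hne : n ≠ 0 := by omega
        have key := key_alg (σ := σ) (ρ := ρ) (ne_of_gt hσ0) n
        have e1 : ‖g n‖ * ρ ^ n ≤ (|(n:ℝ)| ^ β * ‖a (n - 1)‖) * ρ ^ n :=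
          mul_le_mul_of_nonneg_right (hgnorm n hne) (zpow_pos hρ0 n).le
        have e2 : ‖a (n-1)‖ ≤ M * σ ^ (-(n-1)) := hM (n-1)
        have e3 : (|(n:ℝ)| ^ β * ‖a (n - 1)‖) * ρ ^ n
            ≤ (|(n:ℝ)| ^ β * (M * σ ^ (-(n-1)))) * ρ ^ n := by
          apply mul_le_mul_of_nonneg_right _ (zpow_pos hρ0 n).le
          exact mul_le_mul_of_nonneg_left e2 (Real.rpow_nonneg (abs_nonneg _) β)
        have e4 : (|(n:ℝ)| ^ β * (M * σ ^ (-(n-1)))) * ρ ^ n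
            = (M * σ) * (|(n:ℝ)| ^ β * (ρ/σ) ^ n) := by
          linear_combination (M * |(n:ℝ)| ^ β) * key
        calc ‖g n‖ * ρ ^ n ≤ (|(n:ℝ)| ^ β * ‖a (n - 1)‖) * ρ ^ n := e1
          _ ≤ (|(n:ℝ)| ^ β * (M * σ ^ (-(n-1)))) * ρ ^ n := e3
          _ = (M * σ) * (|(n:ℝ)| ^ β * (ρ/σ) ^ n) := e4
  · -- the identity
    funext k
    have hfk := hfa k
    simp only [Pi.add_apply, Pi.smul_apply, smul_eq_mul, Dop, dlogT]
    by_cases hk0 : k = 0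
    · subst hk0
      rw [hg]
      norm_num
      rw [hfa 0, hc]
      norm_num
      try ring
    · by_cases hk1 : k = -1
      · subst hk1
        rw [hg]
        norm_num
        rw [hfa (-1), hc]
        norm_num
        try ring
      · rw [hg]
        simp only [if_neg hk0, if_neg (show k + 1 ≠ 0 by omega)]
        rw [if_neg (by tauto)]
        have h1 : ((k + 1 : ℤ) : F) ≠ 0 := Int.cast_ne_zero.mpr (by omega)
        have h2 : ((k : ℤ) : F) ≠ 0 := Int.cast_ne_zero.mpr hk0
        rw [mul_inv_cancel_left₀ h1, mul_inv_cancel_left₀ h2]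
        rw [hfa k]
        push_cast
        ring_nf
end

section
/- Let R be a Bezout domain (every finitely generated ideal is principal) which is adequate: for all a, b ∈ R one can write a = a₁a₂ with gcd(a₁, b) = 1 and such that every non-unit divisor a₃ of a₂ satisfies gcd(a₃, b) ≠ 1. Then every matrix M ∈ M_{d×e}(R) admits a Smith normal form: M = P·diag(f₁,…,f_min(d,e))·Q with P ∈ GL_d(R), Q ∈ GL_e(R), and f₁ | f₂ | ⋯. -/
/-!
Adequacy is used only through Kaplansky's condition: if `a, b, c` have no common non-unit
divisor, then `(p * a, p * b + q * c)` is the unit ideal for some `p, q` (with `p = 1` when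
`a ≠ 0`). Over a Bezout domain every vector can be reduced to a multiple of a basis vector by an
invertible matrix; with this, Kaplansky's condition merges the columns of a matrix `T` whose
entries have no common non-unit divisor into a single column `T v` with the same property, and
then `u ⬝ᵥ T v = 1` for some `u`. Completing `u` and `v` to invertible matrices puts `1` in the
corner, which clears its row and column. Factoring out the gcd `g` of the entries and inducting on
the size gives the Smith form; the divisibility of the diagonal holds because every later diagonal
entry is a multiple of `g`.
-/

open Matrix

def IsAdequate (R : Type*) [CommRing R] : Prop :=
  ∀ a b : R, a ≠ 0 → ∃ a₁ a₂ : R, a = a₁ * a₂ ∧ IsCoprime a₁ b ∧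
    ∀ a₃ : R, a₃ ∣ a₂ → ¬IsUnit a₃ → ¬IsCoprime a₃ b

section

variable {R : Type*} [CommRing R]

/-- Kaplansky's condition. For `a ≠ 0` one takes `p = 1` and `q = a₁` from the adequate
factorization `a = a₁ * a₂` relative to `b`: a common divisor of `a` and `b + a₁ * c` is coprime
to `a₁`, hence divides `a₂`, and is coprime to `b`. -/
theorem IsAdequate.exists_isCoprime_mul_mul_add_mul [IsBezout R] (hR : IsAdequate R) {a b c : R}
    (h : ∀ k, k ∣ a → k ∣ b → k ∣ c → IsUnit k) : ∃ p q, IsCoprime (p * a) (p * b + q * c) := by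
  by_cases ha : a = 0
  · obtain ⟨p, q, hpq⟩ := IsRelPrime.isCoprime fun k hb hc => h k (ha ▸ dvd_zero k) hb hc
    exact ⟨p, q, by rw [hpq]; exact isCoprime_one_right⟩
  obtain ⟨a₁, a₂, rfl, hco, hmax⟩ := hR a b ha
  refine ⟨1, a₁, ?_⟩
  rw [one_mul, one_mul]
  refine IsRelPrime.isCoprime fun d hda hdb => ?_
  have hd₁ : IsCoprime a₁ d := IsRelPrime.isCoprime fun e he₁ hed =>
    hco.isUnit_of_dvd' he₁ (by simpa using (hed.trans hdb).sub (he₁.mul_right c))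
  by_contra hd
  refine hmax d (hd₁.symm.dvd_of_dvd_mul_left hda) hd (IsRelPrime.isCoprime fun e hed heb => ?_)
  have hec : e ∣ c := (hd₁.of_isCoprime_of_dvd_right hed).symm.dvd_of_dvd_mul_left
    (by simpa using (hed.trans hdb).sub heb)
  exact h e (hed.trans hda) heb hec

section Content

variable {ι : Type*} [Fintype ι]

theorem Matrix.dvd_mulVec_apply {m : Type*} {k : R} (A : Matrix m ι R) {x : ι → R}
    (h : ∀ j, k ∣ x j) (i : m) : k ∣ (A *ᵥ x) i :=
  Finset.dvd_sum fun j _ => (h j).mul_left _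

theorem IsBezout.exists_dvd_and_dotProduct_eq [IsBezout R] (v : ι → R) :
    ∃ g w, (∀ i, g ∣ v i) ∧ v ⬝ᵥ w = g := by
  obtain ⟨g, hg⟩ :=
    (IsBezout.isPrincipal_of_FG _ (Submodule.fg_span (Set.finite_range v))).principal
  obtain ⟨w, hw⟩ := (Submodule.mem_span_range_iff_exists_fun R).mp
    (hg ▸ Submodule.mem_span_singleton_self g)
  refine ⟨g, w, fun i => ?_, by simpa [dotProduct, mul_comm] using hw⟩
  rw [← Ideal.mem_span_singleton, ← Ideal.submodule_span_eq, ← hg]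
  exact Submodule.subset_span ⟨i, rfl⟩

theorem IsBezout.exists_dotProduct_eq_one [IsBezout R] {v : ι → R}
    (h : ∀ k, (∀ i, k ∣ v i) → IsUnit k) : ∃ w, v ⬝ᵥ w = 1 := by
  obtain ⟨g, w, hg, hw⟩ := IsBezout.exists_dvd_and_dotProduct_eq v
  obtain ⟨u, rfl⟩ := h g hg
  exact ⟨(↑u⁻¹ : R) • w, by rw [dotProduct_smul, hw, smul_eq_mul, Units.inv_mul]⟩

theorem IsBezout.eq_zero_or_exists_eq_smul [IsBezout R] [IsDomain R] {m n : Type*} [Fintype m]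
    [Fintype n] (M : Matrix m n R) :
    M = 0 ∨ ∃ (g : R) (T : Matrix m n R), M = g • T ∧ ∀ k, (∀ i j, k ∣ T i j) → IsUnit k := by
  obtain ⟨g, w, hg, hgw⟩ := IsBezout.exists_dvd_and_dotProduct_eq fun p : m × n => M p.1 p.2
  rcases eq_or_ne g 0 with rfl | hg0
  · exact Or.inl (Matrix.ext fun i j => zero_dvd_iff.1 (hg (i, j)))
  choose T hT using hg
  refine Or.inr ⟨g, Matrix.of fun i j => T (i, j), Matrix.ext fun i j => hT (i, j), fun k hk => ?_⟩
  have hdvd : g * k ∣ (fun p : m × n => M p.1 p.2) ⬝ᵥ w := Finset.dvd_sum fun p _ => by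
    simp only [hT p]
    exact (mul_dvd_mul_left g (hk p.1 p.2)).mul_right _
  exact isUnit_of_dvd_one ((mul_dvd_mul_iff_left hg0).1 (by simpa [hgw] using hdvd))

end Content

namespace Matrix

variable {ι : Type*} [DecidableEq ι]

variable (R) in
def pairRows (i j : ι) : Matrix (Fin 2) ι R := Matrix.of ![Pi.single i 1, Pi.single j 1]

theorem transpose_pairRows_mulVec (i j : ι) (y : Fin 2 → R) :
    (pairRows R i j)ᵀ *ᵥ y = Pi.single i (y 0) + Pi.single j (y 1) := by
  ext k
  simp [pairRows, mulVec, dotProduct, Fin.sum_univ_two, Pi.single_apply, eq_comm]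

variable [Fintype ι]

/-- The matrix acting as `A` on the coordinates `i, j` and as the identity on the others. -/
def onPair (i j : ι) (A : Matrix (Fin 2) (Fin 2) R) : Matrix ι ι R :=
  1 + (pairRows R i j)ᵀ * (A - 1) * pairRows R i j

theorem pairRows_mul_transpose {i j : ι} (hij : i ≠ j) :
    pairRows R i j * (pairRows R i j)ᵀ = 1 := by
  ext a b
  fin_cases a <;> fin_cases b <;> simp [pairRows, Matrix.mul_apply', hij.symm]

theorem pairRows_mulVec (i j : ι) (x : ι → R) : pairRows R i j *ᵥ x = ![x i, x j] := by
  ext a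
  fin_cases a <;> simp [pairRows, mulVec]

theorem onPair_mul {i j : ι} (hij : i ≠ j) (A B : Matrix (Fin 2) (Fin 2) R) :
    onPair i j A * onPair i j B = onPair i j (A * B) := by
  have key : ∀ X Y : Matrix (Fin 2) (Fin 2) R, (pairRows R i j)ᵀ * X * pairRows R i j *
      ((pairRows R i j)ᵀ * Y * pairRows R i j) = (pairRows R i j)ᵀ * (X * Y) * pairRows R i j := by
    intro X Y
    simp only [Matrix.mul_assoc]
    rw [← Matrix.mul_assoc (pairRows R i j), pairRows_mul_transpose hij, Matrix.one_mul]
  have hAB : A * B - 1 = (A - 1) + (B - 1) + (A - 1) * (B - 1) := by noncomm_ring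
  simp only [onPair, hAB, Matrix.add_mul, Matrix.mul_add, Matrix.one_mul, Matrix.mul_one, key]
  abel

theorem isUnit_onPair {i j : ι} (hij : i ≠ j) {A : Matrix (Fin 2) (Fin 2) R} (hA : IsUnit A) :
    IsUnit (onPair i j A) := by
  obtain ⟨B, hB⟩ := hA.exists_right_inv
  exact IsUnit.of_mul_eq_one _ (by rw [onPair_mul hij, hB, onPair, sub_self]; simp)

theorem onPair_mulVec (i j : ι) (A : Matrix (Fin 2) (Fin 2) R) (x : ι → R) :
    onPair i j A *ᵥ x =
      x + Pi.single i ((A *ᵥ ![x i, x j]) 0 - x i) + Pi.single j ((A *ᵥ ![x i, x j]) 1 - x j) := by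
  rw [onPair, add_mulVec, one_mulVec, ← mulVec_mulVec, ← mulVec_mulVec, pairRows_mulVec,
    transpose_pairRows_mulVec, sub_mulVec, one_mulVec, add_assoc]
  simp

end Matrix

section Hermite

variable [IsBezout R] [IsDomain R]

theorem IsBezout.exists_isUnit_mulVec_pair_eq (α β : R) :
    ∃ A : Matrix (Fin 2) (Fin 2) R, IsUnit A ∧ ∃ g, A *ᵥ ![α, β] = ![g, 0] := by
  by_cases hβ : β = 0
  · exact ⟨1, isUnit_one, α, by simp [hβ]⟩
  obtain ⟨x, y, hg⟩ := IsBezout.gcd_eq_sum α β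
  obtain ⟨t₀, ht₀⟩ := IsBezout.gcd_dvd_left α β
  obtain ⟨t₁, ht₁⟩ := IsBezout.gcd_dvd_right α β
  have hg0 : IsBezout.gcd α β ≠ 0 := by rintro h; rw [h, zero_mul] at ht₁; exact hβ ht₁
  have hdet : x * t₀ + y * t₁ = 1 :=
    mul_left_cancel₀ hg0 (by linear_combination hg - x * ht₀ - y * ht₁)
  refine ⟨!![x, y; -t₁, t₀], (Matrix.isUnit_iff_isUnit_det _).2 ?_, IsBezout.gcd α β, ?_⟩
  · rw [det_fin_two_of, mul_neg, sub_neg_eq_add, hdet]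
    exact isUnit_one
  · ext k
    fin_cases k
    · simp [mulVec, hg]
    · simp [mulVec]
      linear_combination t₀ * ht₁ - t₁ * ht₀

variable {ι : Type*} [Fintype ι] [DecidableEq ι]

theorem IsBezout.exists_isUnit_mulVec_eq_single (i₀ : ι) (x : ι → R) :
    ∃ P : Matrix ι ι R, IsUnit P ∧ ∃ β, P *ᵥ x = Pi.single i₀ β := by
  suffices h : ∀ (s : Finset ι) (x : ι → R), (∀ k ∉ s, k ≠ i₀ → x k = 0) →
      ∃ P : Matrix ι ι R, IsUnit P ∧ ∃ β, P *ᵥ x = Pi.single i₀ β from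
    h Finset.univ x fun k hk => absurd (Finset.mem_univ k) hk
  intro s
  induction s using Finset.induction_on with
  | empty =>
    intro x hx
    refine ⟨1, isUnit_one, x i₀, funext fun k => ?_⟩
    by_cases hk : k = i₀
    · subst hk; simp
    · simp [hk, hx k (Finset.notMem_empty k) hk]
  | insert j s hj ih =>
    intro x hx
    by_cases hji : j = i₀
    · exact ih x fun k hks hk => hx k (by simp [hks, hji ▸ hk]) hk
    obtain ⟨A, hA, g, hAx⟩ := IsBezout.exists_isUnit_mulVec_pair_eq (x i₀) (x j)
    obtain ⟨P, hP, β, hPx⟩ := ih (onPair i₀ j A *ᵥ x) fun k hks hk => by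
      by_cases hkj : k = j
      · subst hkj; simp [onPair_mulVec, hAx, hk]
      · simp [onPair_mulVec, hAx, hk, hkj, hx k (by simp [hkj, hks]) hk]
    exact ⟨P * onPair i₀ j A, hP.mul (isUnit_onPair (Ne.symm hji) hA), β, by
      rw [← mulVec_mulVec, hPx]⟩

theorem IsBezout.exists_isUnit_apply_eq_of_dotProduct_eq_one (i₀ : ι) {x y : ι → R}
    (h : y ⬝ᵥ x = 1) : ∃ Q : Matrix ι ι R, IsUnit Q ∧ ∀ i, Q i i₀ = x i := by
  obtain ⟨P, hP, β, hPx⟩ := IsBezout.exists_isUnit_mulVec_eq_single i₀ x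
  obtain ⟨P', hP'⟩ := hP.exists_left_inv
  have hx : x = β • fun i => P' i i₀ := by
    rw [← one_mulVec x, ← hP', ← mulVec_mulVec, hPx, mulVec_single]
    ext i
    simp [mul_comm]
  have hβ : IsUnit β := by
    rw [hx, dotProduct_smul, smul_eq_mul] at h
    exact IsUnit.of_mul_eq_one _ h
  refine ⟨P'.updateCol i₀ x, ?_, fun i => updateCol_self⟩
  rw [Matrix.isUnit_iff_isUnit_det, hx, det_updateCol_smul, updateCol_eq_self]
  exact hβ.mul (Matrix.isUnit_det_of_right_inverse hP')

end Hermite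

section Adequate

variable [IsBezout R] [IsDomain R] (hR : IsAdequate R) {ι : Type*} [Fintype ι] [DecidableEq ι]
include hR

/-- After reducing `b` to `β • eᵢ₀`, Kaplansky's condition is applied to `c i₀`, `β` and the gcd
`s` of `a` and the other entries of `c`. -/
theorem IsAdequate.exists_relPrime_smul_add_smul {a : R} {b c : ι → R}
    (h : ∀ k, k ∣ a → (∀ i, k ∣ b i) → (∀ i, k ∣ c i) → IsUnit k) :
    ∃ x y : R, ∀ k, k ∣ a → (∀ i, k ∣ (x • b + y • c) i) → IsUnit k := by
  rcases isEmpty_or_nonempty ι with hι | ⟨⟨i₀⟩⟩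
  · exact ⟨0, 0, fun k hk _ => isUnit_of_dvd_unit hk (h a dvd_rfl isEmptyElim isEmptyElim)⟩
  obtain ⟨P, hP, β, hPb⟩ := IsBezout.exists_isUnit_mulVec_eq_single i₀ b
  obtain ⟨P', hP'⟩ := hP.exists_left_inv
  obtain ⟨s, w, hs, hsw⟩ :=
    IsBezout.exists_dvd_and_dotProduct_eq (Function.update (P *ᵥ c) i₀ a)
  obtain ⟨p, q, hpq⟩ := hR.exists_isCoprime_mul_mul_add_mul (a := s) (b := (P *ᵥ c) i₀) (c := β)
    fun k hks hkc hkβ => by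
      have hkc' : ∀ i, k ∣ (P *ᵥ c) i := fun i => by
        by_cases hi : i = i₀
        · exact hi ▸ hkc
        · simpa [hi] using hks.trans (hs i)
      refine h k (by simpa using hks.trans (hs i₀)) (fun i => ?_) (fun i => ?_)
      · rw [← one_mulVec b, ← hP', ← mulVec_mulVec, hPb]
        refine dvd_mulVec_apply _ (fun j => ?_) i
        by_cases hj : j = i₀ <;> simp [hj, hkβ]
      · rw [← one_mulVec c, ← hP', ← mulVec_mulVec]
        exact dvd_mulVec_apply _ hkc' i
  refine ⟨q, p, fun k hka hk => hpq.isUnit_of_dvd' ?_ ?_⟩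
  all_goals
    have hk' := dvd_mulVec_apply P hk
    rw [mulVec_add, mulVec_smul, mulVec_smul, hPb] at hk'
  · rw [← hsw, dotProduct, Finset.mul_sum]
    refine Finset.dvd_sum fun i _ => ?_
    by_cases hi : i = i₀
    · subst hi
      simpa [mul_left_comm] using (hka.mul_right (w i)).mul_left p
    · simpa [hi, mul_assoc] using (hk' i).mul_right (w i)
  · simpa [add_comm] using hk' i₀

/-- The columns after the first are merged relative to the gcd `g` of `a` and the first column,
and the result is then merged with the first column. -/
theorem IsAdequate.exists_relPrime_mulVec : ∀ {n : ℕ} {a : R} (M : Matrix ι (Fin n) R),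
    (∀ k, k ∣ a → (∀ i j, k ∣ M i j) → IsUnit k) →
      ∃ v, ∀ k, k ∣ a → (∀ i, k ∣ (M *ᵥ v) i) → IsUnit k
  | 0, a, M, h => ⟨0, fun k hk _ => h k hk fun _ j => j.elim0⟩
  | n + 1, a, M, h => by
    obtain ⟨g, w, hg, hgw⟩ :=
      IsBezout.exists_dvd_and_dotProduct_eq fun o : Option ι => o.elim a (M · 0)
    obtain ⟨v, hv⟩ := exists_relPrime_mulVec (a := g) (fun i j => M i j.succ)
      fun k hkg hkM => h k (hkg.trans (hg none)) fun i j =>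
        Fin.cases (hkg.trans (hg (some i))) (hkM i) j
    obtain ⟨x, y, hxy⟩ := hR.exists_relPrime_smul_add_smul (b := (M · 0))
      (c := (fun i j => M i j.succ) *ᵥ v) fun k hka hkb hkc => hv k (by
        rw [← hgw, dotProduct, Fintype.sum_option]
        exact dvd_add (hka.mul_right _) (Finset.dvd_sum fun i _ => (hkb i).mul_right _)) hkc
    refine ⟨Fin.cons x (y • v), fun k hka hk => hxy k hka fun i => ?_⟩
    convert hk i using 1
    simp [mulVec, dotProduct, Fin.sum_univ_succ, Finset.mul_sum, mul_comm, mul_left_comm]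

theorem IsAdequate.exists_isUnit_mul_mul_apply_eq_one {n : ℕ} (T : Matrix ι (Fin n) R) (i₀ : ι)
    (j₀ : Fin n) (h : ∀ k, (∀ i j, k ∣ T i j) → IsUnit k) :
    ∃ (P : Matrix ι ι R) (Q : Matrix (Fin n) (Fin n) R),
      IsUnit P ∧ IsUnit Q ∧ (P * T * Q) i₀ j₀ = 1 := by
  obtain ⟨v, hv⟩ := hR.exists_relPrime_mulVec (a := 0) T fun k _ => h k
  obtain ⟨u, hu⟩ := IsBezout.exists_dotProduct_eq_one fun k => hv k (dvd_zero k)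
  obtain ⟨Q, hQ, hQv⟩ := IsBezout.exists_isUnit_apply_eq_of_dotProduct_eq_one j₀ (y := u ᵥ* T)
    (by rw [← dotProduct_mulVec, dotProduct_comm, hu])
  obtain ⟨A, hA, hAu⟩ := IsBezout.exists_isUnit_apply_eq_of_dotProduct_eq_one i₀ hu
  refine ⟨Aᵀ, Q, (isUnit_transpose A).2 hA, hQ, ?_⟩
  simp only [Matrix.mul_apply, transpose_apply, hAu, hQv]
  rw [← hu, dotProduct_comm, dotProduct_mulVec]
  rfl

end Adequate

namespace Matrix

/-- The block matrix `!![x, r; c, X]`. -/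
def border {α : Type*} {d e : ℕ} (x : α) (r : Fin e → α) (c : Fin d → α)
    (X : Matrix (Fin d) (Fin e) α) : Matrix (Fin (d + 1)) (Fin (e + 1)) α :=
  Matrix.of (vecCons (vecCons x r) fun i => vecCons (c i) (X i))

theorem exists_eq_border {α : Type*} {d e : ℕ} (N : Matrix (Fin (d + 1)) (Fin (e + 1)) α) :
    ∃ x r c X, N = border x r c X :=
  ⟨N 0 0, fun j => N 0 j.succ, fun i => N i.succ 0, Matrix.of fun i j => N i.succ j.succ, by
    ext i j
    refine Fin.cases ?_ (fun i => ?_) i <;> refine Fin.cases ?_ (fun j => ?_) j <;> simp [border]⟩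

variable {d e : ℕ}

theorem border_mul_border {k : ℕ} (x y : R) (r : Fin k → R) (c : Fin d → R) (s : Fin e → R)
    (t : Fin k → R) (X : Matrix (Fin d) (Fin k) R) (Y : Matrix (Fin k) (Fin e) R) :
    border x r c X * border y s t Y =
      border (x * y + r ⬝ᵥ t) (x • s + r ᵥ* Y) (y • c + X *ᵥ t) (vecMulVec c s + X * Y) := by
  ext i j
  refine Fin.cases ?_ (fun i => ?_) i <;> refine Fin.cases ?_ (fun j => ?_) j <;>
    simp [border, Matrix.mul_apply, Fin.sum_univ_succ, dotProduct, vecMul, mulVec, vecMulVec,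
      mul_comm]

theorem border_one_zero_zero_one : border (1 : R) 0 0 (1 : Matrix (Fin d) (Fin d) R) = 1 := by
  ext i j
  refine Fin.cases ?_ (fun i => ?_) i <;> refine Fin.cases ?_ (fun j => ?_) j <;>
    simp [border, Matrix.one_apply, Fin.succ_ne_zero, eq_comm]

theorem border_one_zero_zero_mul {k : ℕ} (X : Matrix (Fin d) (Fin k) R)
    (Y : Matrix (Fin k) (Fin e) R) :
    border (1 : R) 0 0 (X * Y) = border 1 0 0 X * border 1 0 0 Y := by
  simp [border_mul_border]

theorem isUnit_border_one_zero_zero {X : Matrix (Fin d) (Fin d) R} (hX : IsUnit X) :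
    IsUnit (border (1 : R) 0 0 X) := by
  obtain ⟨Y, hY⟩ := hX.exists_right_inv
  exact IsUnit.of_mul_eq_one (border 1 0 0 Y)
    (by rw [← border_one_zero_zero_mul, hY, border_one_zero_zero_one])

theorem exists_isUnit_border_eq (r : Fin e → R) (c : Fin d → R) (X : Matrix (Fin d) (Fin e) R) :
    ∃ (L : Matrix (Fin (d + 1)) (Fin (d + 1)) R) (C : Matrix (Fin (e + 1)) (Fin (e + 1)) R),
      IsUnit L ∧ IsUnit C ∧ border 1 r c X = L * border 1 0 0 (X - vecMulVec c r) * C := by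
  have hc0 : vecMulVec c (0 : Fin e → R) = 0 := by ext; simp [vecMulVec_apply]
  refine ⟨border 1 0 c 1, border 1 r 0 1, IsUnit.of_mul_eq_one (border 1 0 (-c) 1) ?_,
    IsUnit.of_mul_eq_one (border 1 (-r) 0 1) ?_, ?_⟩ <;>
    simp [border_mul_border, border_one_zero_zero_one, hc0]

end Matrix

def seqCons {α : Type*} (a : α) (f : ℕ → α) : ℕ → α
  | 0 => a
  | k + 1 => f k

def Matrix.rectDiag {α : Type*} [Zero α] {d e : ℕ} (f : ℕ → α) : Matrix (Fin d) (Fin e) α :=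
  Matrix.of fun i j => if (i : ℕ) = j then f i else 0

theorem Matrix.border_rectDiag {d e : ℕ} (x : R) (f : ℕ → R) :
    border x 0 0 (rectDiag f : Matrix (Fin d) (Fin e) R) = rectDiag (seqCons x f) := by
  ext i j
  refine Fin.cases ?_ (fun i => ?_) i <;> refine Fin.cases ?_ (fun j => ?_) j <;>
    simp [border, rectDiag, seqCons]

theorem Matrix.smul_rectDiag {d e : ℕ} (g : R) (f : ℕ → R) :
    g • (rectDiag f : Matrix (Fin d) (Fin e) R) = rectDiag (g • f) := by
  ext i j
  simp [rectDiag]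

section Smith

variable [IsBezout R] [IsDomain R] (hR : IsAdequate R)
include hR

theorem IsAdequate.exists_eq_mul_border_mul {d e : ℕ} (T : Matrix (Fin (d + 1)) (Fin (e + 1)) R)
    (h : ∀ k, (∀ i j, k ∣ T i j) → IsUnit k) :
    ∃ (P : Matrix (Fin (d + 1)) (Fin (d + 1)) R) (Q : Matrix (Fin (e + 1)) (Fin (e + 1)) R)
      (K : Matrix (Fin d) (Fin e) R), IsUnit P ∧ IsUnit Q ∧ T = P * border 1 0 0 K * Q := by
  obtain ⟨P₀, Q₀, hP₀, hQ₀, h1⟩ := hR.exists_isUnit_mul_mul_apply_eq_one T 0 0 h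
  obtain ⟨x, r, c, X, hN⟩ := exists_eq_border (P₀ * T * Q₀)
  obtain rfl : x = 1 := by rw [← h1, hN]; rfl
  obtain ⟨L, C, hL, hC, hLC⟩ := exists_isUnit_border_eq r c X
  obtain ⟨P', hP'⟩ := hP₀.exists_left_inv
  obtain ⟨Q', hQ'⟩ := hQ₀.exists_right_inv
  refine ⟨P' * L, C * Q', X - vecMulVec c r, (IsUnit.of_mul_eq_one _ hP').mul hL,
    hC.mul (IsUnit.of_mul_eq_one_right _ hQ'), ?_⟩
  calc T = P' * (P₀ * T * Q₀) * Q' := by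
        simp only [Matrix.mul_assoc, hQ', Matrix.mul_one]
        rw [← Matrix.mul_assoc, hP', Matrix.one_mul]
    _ = _ := by rw [hN, hLC]; simp only [Matrix.mul_assoc]

theorem IsAdequate.exists_eq_mul_rectDiag_mul : ∀ {d e : ℕ} (M : Matrix (Fin d) (Fin e) R),
    ∃ (P : Matrix (Fin d) (Fin d) R) (Q : Matrix (Fin e) (Fin e) R) (f : ℕ → R),
      IsUnit P ∧ IsUnit Q ∧ (∀ i, f i ∣ f (i + 1)) ∧
        M = P * (rectDiag f : Matrix (Fin d) (Fin e) R) * Q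
  | 0, _, M => ⟨1, 1, 0, isUnit_one, isUnit_one, fun _ => dvd_rfl, Subsingleton.elim _ _⟩
  | _ + 1, 0, M => ⟨1, 1, 0, isUnit_one, isUnit_one, fun _ => dvd_rfl, Subsingleton.elim _ _⟩
  | d + 1, e + 1, M => by
    obtain rfl | ⟨g, T, rfl, hT⟩ := IsBezout.eq_zero_or_exists_eq_smul M
    · exact ⟨1, 1, 0, isUnit_one, isUnit_one, fun _ => dvd_rfl, by ext; simp [rectDiag]⟩
    obtain ⟨P₀, Q₀, K, hP₀, hQ₀, rfl⟩ := hR.exists_eq_mul_border_mul T hT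
    obtain ⟨P₁, Q₁, f, hP₁, hQ₁, hf, rfl⟩ := exists_eq_mul_rectDiag_mul K
    refine ⟨P₀ * border 1 0 0 P₁, border 1 0 0 Q₁ * Q₀, g • seqCons 1 f,
      hP₀.mul (isUnit_border_one_zero_zero hP₁), (isUnit_border_one_zero_zero hQ₁).mul hQ₀,
      ?_, ?_⟩
    · rintro (_ | i) <;> exact mul_dvd_mul_left g (by simp [seqCons, hf])
    · rw [← smul_rectDiag, ← border_rectDiag, border_one_zero_zero_mul, border_one_zero_zero_mul]
      simp only [Matrix.mul_smul, Matrix.smul_mul, Matrix.mul_assoc]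

end Smith

end

/-- Helmer's theorem: let `R` be a Bezout domain (every finitely generated ideal is principal)
which is adequate: for all `a b ∈ R` with `a ≠ 0` one can write `a = a₁a₂` with
`gcd(a₁, b) = 1` (i.e. `(a₁, b) = R`, i.e. `IsCoprime a₁ b`) and such that every non-unit divisor
`a₃` of `a₂` satisfies `gcd(a₃, b) ≠ 1`.  Then every matrix `M ∈ M_{d×e}(R)` admits a Smith
normal form `M = P · diag(f₁, f₂, …) · Q` with `P ∈ GL_d(R)`, `Q ∈ GL_e(R)` and
`f₁ ∣ f₂ ∣ ⋯`. -/
theorem adequate_bezout_smith_normal_form (R : Type*) [CommRing R] [IsDomain R] [IsBezout R]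
    (hadequate : ∀ a b : R, a ≠ 0 → ∃ a₁ a₂ : R, a = a₁ * a₂ ∧ IsCoprime a₁ b ∧
      ∀ a₃ : R, a₃ ∣ a₂ → ¬IsUnit a₃ → ¬IsCoprime a₃ b)
    (d e : ℕ) (M : Matrix (Fin d) (Fin e) R) :
    ∃ (P : Matrix (Fin d) (Fin d) R) (Q : Matrix (Fin e) (Fin e) R) (f : ℕ → R),
      IsUnit P.det ∧ IsUnit Q.det ∧ (∀ i : ℕ, f i ∣ f (i + 1)) ∧
      M = P * Matrix.of (fun (i : Fin d) (j : Fin e) =>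
        if (i : ℕ) = (j : ℕ) then f (i : ℕ) else 0) * Q := by
  obtain ⟨P, Q, f, hP, hQ, hf, hM⟩ := IsAdequate.exists_eq_mul_rectDiag_mul hadequate M
  exact ⟨P, Q, f, (isUnit_iff_isUnit_det P).1 hP, (isUnit_iff_isUnit_det Q).1 hQ, hf, hM⟩
end
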